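/- Let T be a tree rooted at r with subtrees R¹,…,R^m after removing r, and suppose every leaf edge of the (contracted) tree T' is covered only by cross-links and every cross-link covers at most one leaf edge of T'. If T' has q leaves, then any feasible fractional solution y' has total weight y'(L) ≥ q, and choosing one cross-link per leaf gives a set of q links covering all of E(T') (because the cross-link instance is star-shaped with hub r). -/

import Mathlib

open SimpleGraph
open scoped Classical

/-!
Every leaf of the tree has a single incident edge, which `y` covers with weight at least one and,
on its support, only by cross-links. A cross-link of positive weight covers at most one leaf edge,
and two leaves sharing their edge would both be endpoints of it, i.e. it would join two adjacent
vertices, which no cross-link does. Hence the links covering distinct leaves are disjoint: this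
gives `y(L) ≥ q`, and picking one link per leaf gives `q` distinct cross-links. The chosen link of
a leaf `u` ends at `u` and passes through `r`, so it covers the whole path from `r` to `u`, and
every edge lies on such a path.
-/

/-- The unique path between two vertices of a tree, as a walk. -/
noncomputable def tpath {V : Type*} (G : SimpleGraph V) (hG : G.IsTree) (u v : V) : G.Walk u v :=
  (hG.existsUnique_path u v).choose

/-- `cov(e)`: the links whose tree path contains the edge `e`. -/
noncomputable def covE {V : Type*} (G : SimpleGraph V) (hG : G.IsTree) (e : Sym2 V) :
    Set (V × V) := {ℓ | e ∈ (tpath G hG ℓ.1 ℓ.2).edges}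

/-- A cross-link w.r.t. the root `r`: its endpoints lie in two different components of
`T − r` (so its tree path passes through `r`). -/
def CrossLink {V : Type*} (G : SimpleGraph V) (r : V) (ℓ : V × V) : Prop :=
  ℓ.1 ≠ r ∧ ℓ.2 ≠ r ∧ ¬ (G.deleteEdges {e | r ∈ e}).Reachable ℓ.1 ℓ.2

/-- A leaf edge: an edge incident to a vertex of degree `1`. -/
def IsLeafEdge {V : Type*} [Fintype V] [DecidableEq V] (G : SimpleGraph V)
    [DecidableRel G.Adj] (e : Sym2 V) : Prop :=
  e ∈ G.edgeSet ∧ ∃ u ∈ e, G.degree u = 1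

section DisjointCovers

variable {ι α : Type*} {I : Finset ι} {L : Finset α} {y : α → ℝ} {R : ι → α → Prop}
  [∀ i, DecidablePred (R i)]

theorem Finset.card_le_sum_of_disjoint_covers (hy0 : ∀ ℓ, 0 ≤ y ℓ)
    (hcov : ∀ i ∈ I, 1 ≤ ∑ ℓ ∈ L with R i ℓ, y ℓ)
    (hdisj : ∀ ℓ ∈ L, y ℓ ≠ 0 → ∀ i ∈ I, ∀ j ∈ I, R i ℓ → R j ℓ → i = j) :
    (I.card : ℝ) ≤ ∑ ℓ ∈ L, y ℓ := by
  have hmult : ∀ ℓ ∈ L, ((I.filter (R · ℓ)).card : ℝ) * y ℓ ≤ y ℓ := by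
    intro ℓ hℓ
    by_cases hy : y ℓ = 0
    · simp [hy]
    · refine mul_le_of_le_one_left (hy0 ℓ) ?_
      exact_mod_cast Finset.card_le_one.mpr fun i hi j hj =>
        hdisj ℓ hℓ hy i (Finset.mem_filter.mp hi).1 j (Finset.mem_filter.mp hj).1
          (Finset.mem_filter.mp hi).2 (Finset.mem_filter.mp hj).2
  calc (I.card : ℝ) = ∑ _i ∈ I, (1 : ℝ) := by simp
    _ ≤ ∑ i ∈ I, ∑ ℓ ∈ L with R i ℓ, y ℓ := Finset.sum_le_sum hcov
    _ = ∑ ℓ ∈ L, ((I.filter (R · ℓ)).card : ℝ) * y ℓ := by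
      simp only [Finset.sum_filter, Finset.card_filter, Nat.cast_sum, Finset.sum_mul]
      rw [Finset.sum_comm]
      simp
    _ ≤ ∑ ℓ ∈ L, y ℓ := Finset.sum_le_sum hmult

theorem Finset.exists_subset_card_eq_of_disjoint_covers
    (hcov : ∀ i ∈ I, 1 ≤ ∑ ℓ ∈ L with R i ℓ, y ℓ)
    (hdisj : ∀ ℓ ∈ L, y ℓ ≠ 0 → ∀ i ∈ I, ∀ j ∈ I, R i ℓ → R j ℓ → i = j) :
    ∃ S ⊆ L, S.card = I.card ∧ (∀ ℓ ∈ S, y ℓ ≠ 0 ∧ ∃ i ∈ I, R i ℓ) ∧ ∀ i ∈ I, ∃ ℓ ∈ S, R i ℓ := by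
  have hex : ∀ i ∈ I, ∃ ℓ ∈ L, R i ℓ ∧ y ℓ ≠ 0 := by
    intro i hi
    obtain ⟨ℓ, hℓ, hy⟩ :=
      Finset.exists_ne_zero_of_sum_ne_zero (zero_lt_one.trans_le (hcov i hi)).ne'
    exact ⟨ℓ, (Finset.mem_filter.mp hℓ).1, (Finset.mem_filter.mp hℓ).2, hy⟩
  rcases I.eq_empty_or_nonempty with rfl | ⟨i₀, hi₀⟩
  · exact ⟨∅, by simp⟩
  have : Nonempty α := ⟨(hex i₀ hi₀).choose⟩
  choose! f hfL hfR hfy using hex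
  refine ⟨I.image f, ?_, ?_, ?_, fun i hi => ⟨f i, Finset.mem_image_of_mem f hi, hfR i hi⟩⟩
  · simpa only [Finset.image_subset_iff] using hfL
  · exact Finset.card_image_of_injOn fun i hi j hj hij =>
      hdisj (f i) (hfL i hi) (hfy i hi) i hi j hj (hfR i hi) (hij ▸ hfR j hj)
  · simp only [Finset.mem_image, forall_exists_index, and_imp]
    rintro _ i hi rfl
    exact ⟨hfy i hi, i, hi, hfR i hi⟩

end DisjointCovers

theorem SimpleGraph.Walk.IsPath.eq_or_eq_of_degree_eq_one {V : Type*} {G : SimpleGraph V}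
    {u v w : V} {p : G.Walk u v} (hp : p.IsPath) [Fintype (G.neighborSet w)]
    (hw : w ∈ p.support) (hdeg : G.degree w = 1) : w = u ∨ w = v := by
  obtain ⟨i, rfl, hi⟩ := Walk.mem_support_iff_exists_getVert.mp hw
  by_contra! hne
  have hi0 : i ≠ 0 := by rintro rfl; exact hne.1 p.getVert_zero
  have hil : i < p.length := lt_of_le_of_ne hi (by rintro rfl; exact hne.2 p.getVert_length)
  have hsub : (p.toSubgraph.neighborSet (p.getVert i)).ncard ≤
      (G.neighborSet (p.getVert i)).ncard :=
    Set.ncard_le_ncard (p.toSubgraph.neighborSet_subset _) (Set.toFinite _)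
  rw [hp.ncard_neighborSet_toSubgraph_internal_eq_two hi0 hil, Set.ncard_eq_toFinset_card',
    Set.toFinset_card, card_neighborSet_eq_degree, hdeg] at hsub
  omega

theorem CrossLink.mem_support {V : Type*} {G : SimpleGraph V} {r : V} {ℓ : V × V}
    (hℓ : CrossLink G r ℓ) (p : G.Walk ℓ.1 ℓ.2) : r ∈ p.support := by
  by_contra hr
  exact hℓ.2.2 ⟨p.toDeleteEdges _ fun e he hre => hr (Walk.mem_support_of_mem_edges he hre)⟩

theorem CrossLink.not_adj {V : Type*} {G : SimpleGraph V} {r : V} {ℓ : V × V}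
    (hℓ : CrossLink G r ℓ) : ¬ G.Adj ℓ.1 ℓ.2 := fun hadj =>
  hℓ.2.2 (deleteEdges_adj.mpr ⟨hadj, by simp [Sym2.mem_iff, hℓ.1.symm, hℓ.2.1.symm]⟩).reachable

section Tree

variable {V : Type*} {G : SimpleGraph V} (hG : G.IsTree)

theorem tpath_isPath (u v : V) : (tpath G hG u v).IsPath :=
  (hG.existsUnique_path u v).choose_spec.1

theorem eq_tpath {u v : V} {p : G.Walk u v} (hp : p.IsPath) : p = tpath G hG u v :=
  (hG.existsUnique_path u v).choose_spec.2 p hp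

theorem tpath_reverse (u v : V) : (tpath G hG u v).reverse = tpath G hG v u :=
  eq_tpath hG (tpath_isPath hG u v).reverse

theorem edges_tpath_subset_of_mem_support {a b r : V} (hr : r ∈ (tpath G hG a b).support) :
    (tpath G hG a r).edges ⊆ (tpath G hG a b).edges ∧
      (tpath G hG r b).edges ⊆ (tpath G hG a b).edges := by
  rw [← eq_tpath hG ((tpath_isPath hG a b).takeUntil hr),
    ← eq_tpath hG ((tpath_isPath hG a b).dropUntil hr)]
  exact ⟨Walk.edges_takeUntil_subset_edges _ hr, Walk.edges_dropUntil_subset_edges _ hr⟩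

theorem tpath_concat {r u w : V} (h : G.Adj u w) (hw : w ∉ (tpath G hG r u).support) :
    tpath G hG r w = (tpath G hG r u).concat h :=
  (eq_tpath hG ((tpath_isPath hG r u).concat hw h)).symm

theorem exists_mem_edges_tpath (r : V) {e : Sym2 V} (he : e ∈ G.edgeSet) :
    ∃ u, e ∈ (tpath G hG r u).edges := by
  induction e using Sym2.ind with
  | h a b =>
    rw [mem_edgeSet] at he
    by_cases hb : b ∈ (tpath G hG r a).support
    · have hnil : ¬ (tpath G hG r a).Nil := fun h => he.ne <| by
        have hbr : b = r := by simpa [Walk.nil_iff_support_eq.mp h] using hb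
        rw [hbr, h.eq]
      refine ⟨a, ?_⟩
      rw [hG.isAcyclic.eq_penultimate_of_adj_end (tpath_isPath hG r a) he hb]
      exact Sym2.eq_swap ▸ Walk.mk_penultimate_end_mem_edges hnil
    · exact ⟨b, by simp [tpath_concat hG he hb]⟩

end Tree

def CoversEdgeAt {V : Type*} (G : SimpleGraph V) (hG : G.IsTree) (v : V) (ℓ : V × V) : Prop :=
  ∃ w, G.Adj v w ∧ s(v, w) ∈ (tpath G hG ℓ.1 ℓ.2).edges

section FiniteTree

variable {V : Type*} [Fintype V] {G : SimpleGraph V} [DecidableRel G.Adj]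
  (hG : G.IsTree)

-- A vertex farthest from `r` among those whose root path contains `e` must be a leaf.
theorem exists_degree_eq_one_mem_edges_tpath (r : V) {e : Sym2 V} (he : e ∈ G.edgeSet) :
    ∃ u, G.degree u = 1 ∧ e ∈ (tpath G hG r u).edges := by
  obtain ⟨u₀, hu₀⟩ := exists_mem_edges_tpath hG r he
  obtain ⟨u, hu, hmax⟩ := (Finset.univ.filter fun u => e ∈ (tpath G hG r u).edges).exists_max_image
    (fun u => (tpath G hG r u).length) ⟨u₀, Finset.mem_filter.mpr ⟨Finset.mem_univ u₀, hu₀⟩⟩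
  have hue : e ∈ (tpath G hG r u).edges := (Finset.mem_filter.mp hu).2
  have hnil : ¬ (tpath G hG r u).Nil := fun h => by simp [Walk.edges_eq_nil.mpr h] at hue
  refine ⟨u, degree_eq_one_iff_existsUnique_adj.mpr
    ⟨_, ((tpath G hG r u).adj_penultimate hnil).symm, fun w huw => ?_⟩, hue⟩
  by_contra hne
  have hw : w ∉ (tpath G hG r u).support := fun hw =>
    hne (hG.isAcyclic.eq_penultimate_of_adj_end (tpath_isPath hG r u) huw hw)
  have := hmax w (by simp [tpath_concat hG huw hw, hue])
  simp [tpath_concat hG huw hw] at this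

theorem CrossLink.eq_of_coversEdgeAt [DecidableEq V] {r : V} {ℓ : V × V}
    (hℓ : CrossLink G r ℓ) (hone : (G.edgeFinset.filter (fun e => IsLeafEdge G e ∧
      e ∈ (tpath G hG ℓ.1 ℓ.2).edges)).card ≤ 1)
    {v w : V} (hv : G.degree v = 1) (hw : G.degree w = 1)
    (hvℓ : CoversEdgeAt G hG v ℓ) (hwℓ : CoversEdgeAt G hG w ℓ) : v = w := by
  obtain ⟨v', hvv', hev⟩ := hvℓ
  obtain ⟨w', hww', hew⟩ := hwℓ
  have hsame : s(v, v') = s(w, w') := Finset.card_le_one.mp hone _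
    (Finset.mem_filter.mpr ⟨mem_edgeFinset.mpr hvv', ⟨hvv', v, Sym2.mem_mk_left v v', hv⟩, hev⟩) _
    (Finset.mem_filter.mpr ⟨mem_edgeFinset.mpr hww', ⟨hww', w, Sym2.mem_mk_left w w', hw⟩, hew⟩)
  by_contra hne
  -- Two adjacent leaves on the path of `ℓ` are its endpoints, but a cross-link spans no edge.
  have hvw : G.Adj v w := by
    rcases Sym2.eq_iff.mp hsame with ⟨h, -⟩ | ⟨-, rfl⟩
    exacts [absurd h hne, hvv']
  have hvend := (tpath_isPath hG ℓ.1 ℓ.2).eq_or_eq_of_degree_eq_one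
    (Walk.fst_mem_support_of_mem_edges _ hev) hv
  have hwend := (tpath_isPath hG ℓ.1 ℓ.2).eq_or_eq_of_degree_eq_one
    (Walk.fst_mem_support_of_mem_edges _ hew) hw
  apply hℓ.not_adj
  rcases hvend with rfl | rfl <;> rcases hwend with h | h
  exacts [absurd h.symm hne, h ▸ hvw, h ▸ hvw.symm, absurd h.symm hne]

theorem CrossLink.edges_tpath_subset {r : V} {ℓ : V × V} (hℓ : CrossLink G r ℓ) {u : V}
    (hu : G.degree u = 1) (huℓ : CoversEdgeAt G hG u ℓ) :
    (tpath G hG r u).edges ⊆ (tpath G hG ℓ.1 ℓ.2).edges := by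
  obtain ⟨x, -, hux⟩ := huℓ
  obtain ⟨hfst, hsnd⟩ :=
    edges_tpath_subset_of_mem_support hG (hℓ.mem_support (tpath G hG ℓ.1 ℓ.2))
  rcases (tpath_isPath hG ℓ.1 ℓ.2).eq_or_eq_of_degree_eq_one
    (Walk.fst_mem_support_of_mem_edges _ hux) hu with rfl | rfl
  · intro e he
    apply hfst
    rw [← tpath_reverse, Walk.edges_reverse, List.mem_reverse]
    exact he
  · exact hsnd

end FiniteTree

theorem leaf_crosslink_rounding_general {V : Type*} [Fintype V] [DecidableEq V]
    (G : SimpleGraph V) [DecidableRel G.Adj] (hG : G.IsTree) (r : V)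
    (L : Finset (V × V)) (y : V × V → ℝ)
    (hy0 : ∀ ℓ, 0 ≤ y ℓ)
    (hfeas : ∀ e ∈ G.edgeSet, 1 ≤ ∑ ℓ ∈ L.filter (· ∈ covE G hG e), y ℓ)
    (honlycross : ∀ e, IsLeafEdge G e → ∀ ℓ ∈ L, y ℓ ≠ 0 →
      e ∈ (tpath G hG ℓ.1 ℓ.2).edges → CrossLink G r ℓ)
    (honeleaf : ∀ ℓ ∈ L, CrossLink G r ℓ →
      (G.edgeFinset.filter (fun e => IsLeafEdge G e ∧
        e ∈ (tpath G hG ℓ.1 ℓ.2).edges)).card ≤ 1)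
    (q : ℕ) (hq : q = (Finset.univ.filter (fun v => G.degree v = 1)).card) :
    (q : ℝ) ≤ ∑ ℓ ∈ L, y ℓ ∧
    ∃ S ⊆ L, S.card = q ∧ (∀ ℓ ∈ S, CrossLink G r ℓ) ∧
      ∀ e ∈ G.edgeSet, ∃ ℓ ∈ S, e ∈ (tpath G hG ℓ.1 ℓ.2).edges := by
  subst hq
  set leaves := Finset.univ.filter (fun v => G.degree v = 1)
  have hdeg : ∀ v ∈ leaves, G.degree v = 1 := fun v hv => (Finset.mem_filter.mp hv).2
  have hcross : ∀ v ∈ leaves, ∀ ℓ ∈ L, y ℓ ≠ 0 → CoversEdgeAt G hG v ℓ → CrossLink G r ℓ :=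
    fun v hv ℓ hℓ hy ⟨w, hvw, hcov⟩ =>
      honlycross s(v, w) ⟨hvw, v, Sym2.mem_mk_left v w, hdeg v hv⟩ ℓ hℓ hy hcov
  have hcov : ∀ v ∈ leaves, 1 ≤ ∑ ℓ ∈ L with CoversEdgeAt G hG v ℓ, y ℓ := by
    intro v hv
    obtain ⟨w, hvw, -⟩ := degree_eq_one_iff_existsUnique_adj.mp (hdeg v hv)
    refine (hfeas s(v, w) hvw).trans (Finset.sum_le_sum_of_subset_of_nonneg ?_ fun ℓ _ _ => hy0 ℓ)
    intro ℓ hℓ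
    rw [Finset.mem_filter] at hℓ ⊢
    exact ⟨hℓ.1, w, hvw, hℓ.2⟩
  have hdisj : ∀ ℓ ∈ L, y ℓ ≠ 0 → ∀ v ∈ leaves, ∀ w ∈ leaves,
      CoversEdgeAt G hG v ℓ → CoversEdgeAt G hG w ℓ → v = w :=
    fun ℓ hℓ hy v hv w hw hRv hRw =>
      have hℓr := hcross v hv ℓ hℓ hy hRv
      hℓr.eq_of_coversEdgeAt hG (honeleaf ℓ hℓ hℓr) (hdeg v hv) (hdeg w hw) hRv hRw
  obtain ⟨S, hSL, hScard, hScross, hSleaves⟩ :=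
    Finset.exists_subset_card_eq_of_disjoint_covers hcov hdisj
  refine ⟨Finset.card_le_sum_of_disjoint_covers hy0 hcov hdisj,
    S, hSL, hScard, fun ℓ hℓ => ?_, fun e he => ?_⟩
  · obtain ⟨hy, v, hv, hRv⟩ := hScross ℓ hℓ
    exact hcross v hv ℓ (hSL hℓ) hy hRv
  · obtain ⟨u, hu, hue⟩ := exists_degree_eq_one_mem_edges_tpath hG r he
    obtain ⟨ℓ, hℓ, huℓ⟩ := hSleaves u (Finset.mem_filter.mpr ⟨Finset.mem_univ u, hu⟩)
    obtain ⟨hy, v, hv, hRv⟩ := hScross ℓ hℓ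
    exact ⟨ℓ, hℓ, (hcross v hv ℓ (hSL hℓ) hy hRv).edges_tpath_subset hG hu huℓ hue⟩

/-- Suppose every leaf edge of the tree `T'` is covered (in the
support of the feasible fractional solution `y'`) only by cross-links, and every
cross-link covers at most one leaf edge.  If `T'` has `q` leaves, then `y'(L) ≥ q`,
and one can choose one cross-link per leaf to obtain a set of `q` cross-links covering
all edges of `T'` (the cross-link instance being star-shaped with hub `r`). -/
theorem leaf_crosslink_rounding {V : Type*} [Fintype V] [DecidableEq V]
    (G : SimpleGraph V) [DecidableRel G.Adj] (hG : G.IsTree) (r : V)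
    (L : Finset (V × V)) (y : V × V → ℝ)
    (hy0 : ∀ ℓ, 0 ≤ y ℓ) (hysupp : ∀ ℓ ∉ L, y ℓ = 0)
    (hfeas : ∀ e ∈ G.edgeSet, 1 ≤ ∑ ℓ ∈ L.filter (· ∈ covE G hG e), y ℓ)
    (honlycross : ∀ e, IsLeafEdge G e → ∀ ℓ ∈ L, y ℓ ≠ 0 →
      e ∈ (tpath G hG ℓ.1 ℓ.2).edges → CrossLink G r ℓ)
    (honeleaf : ∀ ℓ ∈ L, CrossLink G r ℓ →
      (G.edgeFinset.filter (fun e => IsLeafEdge G e ∧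
        e ∈ (tpath G hG ℓ.1 ℓ.2).edges)).card ≤ 1)
    (q : ℕ) (hq : q = (Finset.univ.filter (fun v => G.degree v = 1)).card) :
    (q : ℝ) ≤ ∑ ℓ ∈ L, y ℓ ∧
    ∃ S ⊆ L, S.card = q ∧ (∀ ℓ ∈ S, CrossLink G r ℓ) ∧
      ∀ e ∈ G.edgeSet, ∃ ℓ ∈ S, e ∈ (tpath G hG ℓ.1 ℓ.2).edges :=
  leaf_crosslink_rounding_general G hG r L y hy0 hfeas honlycross honeleaf q hq
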